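/- arXiv:1302.5038 — 4 statements merged into one kernel-verified Lean document; each statement's English description precedes it below -/
import Mathlib

section
/- For every integer m > 5, the complete bipartite graph K_{m,2m} cannot have its vertex set covered by at most 2 vertex-disjoint paths. -/
/-!
A path in a bipartite graph alternates between the two sides, so it contains at most one more
vertex of one side than of the other. Covering `K_{m,2m}` by `n` disjoint paths therefore forces
`2m ≤ m + n`, which fails for `n ≤ 2 < m`.
-/

open SimpleGraph

/-- The deletion of a vertex set `S` leaves a connected graph. -/
def DeleteConnected {V : Type*} (G : SimpleGraph V) (S : Set V) : Prop :=
  ((⊤ : G.Subgraph).deleteVerts S).coe.Connected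

/-- `G` is `k`-connected: more than `k` vertices, and removing fewer than `k`
vertices leaves a connected graph. -/
def IsKConnected {V : Type*} (G : SimpleGraph V) (k : ℕ) : Prop :=
  k < Nat.card V ∧ ∀ S : Set V, S.ncard < k → DeleteConnected G S

/-- The vertex connectivity `κ(G)`. -/
noncomputable def kappa {V : Type*} (G : SimpleGraph V) : ℕ := sSup {k | IsKConnected G k}

/-- The independence number `α(G)`. -/
noncomputable def indepNum {V : Type*} (G : SimpleGraph V) : ℕ :=
  sSup {n | ∃ s : Set V, (∀ a ∈ s, ∀ b ∈ s, ¬ G.Adj a b) ∧ s.ncard = n}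

/-- The branch vertices of a graph: the vertices of degree more than `2`. -/
def branchVerts {V : Type*} (T : SimpleGraph V) : Set V := {v | 2 < (T.neighborSet v).ncard}

/-- `s(G)`: the minimum number of branch vertices over all spanning trees of `G`. -/
noncomputable def sBranch {V : Type*} (G : SimpleGraph V) : ℕ :=
  sInf {n | ∃ T : SimpleGraph V, T ≤ G ∧ T.IsTree ∧ (branchVerts T).ncard = n}

/-- `T` is a spanning generalized caterpillar of `G`: a spanning tree all of whose
branch vertices lie on a single path. -/
def IsSGCof {V : Type*} (G T : SimpleGraph V) : Prop :=
  T ≤ G ∧ T.IsTree ∧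
    ∃ (u v : V) (p : T.Walk u v), p.IsPath ∧ ∀ w ∈ branchVerts T, w ∈ p.support

/-- `G` has a spanning generalized caterpillar. -/
def HasSGC {V : Type*} (G : SimpleGraph V) : Prop := ∃ T, IsSGCof G T

/-- The vertices of `G` can be covered by `n` pairwise vertex-disjoint paths. -/
def HasPathCover {V : Type*} (G : SimpleGraph V) (n : ℕ) : Prop :=
  ∃ (u v : Fin n → V) (p : ∀ i, G.Walk (u i) (v i)),
    (∀ i, (p i).IsPath) ∧
    (∀ i j, i ≠ j → ∀ x, x ∈ (p i).support → x ∉ (p j).support) ∧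
    (∀ x, ∃ i, x ∈ (p i).support)

/-- The construction of Theorem 2: an independent set `S` of size `m` together with
`m + 2` copies of `K_{2m+1,m}` with parts `B i` (size `2m+1`) and `A i` (size `m`);
the chosen vertices `t i j` are the first `m` vertices of `B i`, each joined to all of `S`. -/
def ConstructionGraph (m : ℕ) :
    SimpleGraph (Fin m ⊕ (Fin (m + 2) × (Fin (2 * m + 1) ⊕ Fin m))) :=
  SimpleGraph.fromRel (fun x y =>
    match x, y with
    | Sum.inr ⟨i, Sum.inl _⟩, Sum.inr ⟨i', Sum.inr _⟩ => i = i'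
    | Sum.inl _, Sum.inr ⟨_, Sum.inl b⟩ => (b : ℕ) < m
    | _, _ => False)


open Finset

theorem sum_countP_eq_card_filter {ι V : Type*} [Fintype ι] [Fintype V] [DecidableEq V]
    (l : ι → List V) (hnodup : ∀ i, (l i).Nodup)
    (hdisj : Pairwise fun i j => (l i).Disjoint (l j))
    (hcov : ∀ x, ∃ i, x ∈ l i) (P : V → Prop) [DecidablePred P] :
    ∑ i, (l i).countP (P ·) = #{x | P x} := by
  have hunion : univ.filter P = univ.biUnion fun i => ((l i).filter (P ·)).toFinset := by
    ext x
    obtain ⟨i, hi⟩ := hcov x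
    simp only [mem_filter, mem_univ, true_and, mem_biUnion, List.mem_toFinset, List.mem_filter,
      decide_eq_true_eq]
    exact ⟨fun hx => ⟨i, hi, hx⟩, fun ⟨_, _, hx⟩ => hx⟩
  have hpairwise :
      ((univ : Finset ι) : Set ι).PairwiseDisjoint fun i => ((l i).filter (P ·)).toFinset :=
    fun i _ j _ hij => disjoint_left.mpr fun _ hi hj =>
      hdisj hij (List.mem_of_mem_filter (List.mem_toFinset.mp hi))
        (List.mem_of_mem_filter (List.mem_toFinset.mp hj))
  rw [hunion, card_biUnion hpairwise]
  refine sum_congr rfl fun i _ => ?_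
  rw [List.toFinset_card_of_nodup ((hnodup i).filter _), List.countP_eq_length_filter]

namespace SimpleGraph

variable {V : Type*} {G : SimpleGraph V}

theorem Walk.countP_support_color_le (c : G.Coloring Bool) {u v : V} (p : G.Walk u v)
    (b : Bool) :
    p.support.countP (c · = b) ≤ p.support.countP (c · = !b) + if c u = b then 1 else 0 := by
  induction p generalizing b with
  | nil => cases h : c _ <;> cases b <;> simp [h]
  | @cons a w _ hadj p ih =>
    have hcol : c a ≠ c w := c.valid hadj
    have := ih b
    simp only [Walk.support_cons, List.countP_cons]
    cases ha : c a <;> cases hw : c w <;> cases b <;> simp_all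

theorem Walk.countP_support_color_le_add_one (c : G.Coloring Bool) {u v : V} (p : G.Walk u v)
    (b : Bool) : p.support.countP (c · = b) ≤ p.support.countP (c · = !b) + 1 := by
  have := p.countP_support_color_le c b
  split_ifs at this <;> omega

theorem CompleteBipartiteGraph.card_filter_bicoloring_false (α β : Type*) [Fintype α]
    [Fintype β] : #{x | bicoloring α β x = false} = Fintype.card α := by
  rw [show univ.filter (bicoloring α β · = false) = univ.map .inl by
    ext (x | x) <;> rw [mem_filter] <;> simp [bicoloring, Coloring.mk]]
  simp

theorem CompleteBipartiteGraph.card_filter_bicoloring_true (α β : Type*) [Fintype α]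
    [Fintype β] : #{x | bicoloring α β x = true} = Fintype.card β := by
  rw [show univ.filter (bicoloring α β · = true) = univ.map .inr by
    ext (x | x) <;> rw [mem_filter] <;> simp [bicoloring, Coloring.mk]]
  simp

end SimpleGraph

/-- For every integer `m > 5`, the complete bipartite graph `K_{m,2m}` cannot have its
vertex set covered by at most two vertex-disjoint paths. -/
theorem stmt0 (m : ℕ) (hm : 5 < m) (n : ℕ) (hn : n ≤ 2) :
    ¬ HasPathCover (completeBipartiteGraph (Fin m) (Fin (2 * m))) n := by
  rintro ⟨u, v, p, hp, hdisj, hcov⟩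
  set c := CompleteBipartiteGraph.bicoloring (Fin m) (Fin (2 * m))
  have hcount (b : Bool) : ∑ i, (p i).support.countP (c · = b) = #{x | c x = b} :=
    sum_countP_eq_card_filter _ (fun i => (hp i).support_nodup)
      (fun i j hij _ hi hj => hdisj i j hij _ hi hj) hcov _
  have hbound : ∑ i, (p i).support.countP (c · = true) ≤
      ∑ i, ((p i).support.countP (c · = false) + 1) :=
    sum_le_sum fun i _ => (p i).countP_support_color_le_add_one c true
  rw [sum_add_distrib, hcount, hcount, CompleteBipartiteGraph.card_filter_bicoloring_true,
    CompleteBipartiteGraph.card_filter_bicoloring_false] at hbound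
  simp only [Fintype.card_fin, sum_const, card_univ, smul_eq_mul, mul_one] at hbound
  omega
end

section
/- Let G be a connected graph and suppose G has a spanning tree T with at most κ(G) branch vertices (vertices of degree more than 2 in T), where κ(G) is the vertex connectivity of G. Then G has a spanning generalized caterpillar, i.e., a spanning tree in which all vertices of degree more than 2 lie on a single path. -/
open SimpleGraph

/-!
Menger's theorem, proved by induction on the number of edges, gives for a vertex `x` off a path
`P` a fan of `min κ |P|` paths from `x` to `P` that pairwise meet only in `x` and meet `P` only in
their ends. If `B` has at most `κ` vertices, the fan ends cut `P` into more stretches than `B ∩ P`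
has elements, so some stretch (before the first end, after the last, or between two ends) has no
vertex of `B` in its interior; rerouting `P` through `x` around it keeps `B ∩ P` and gains `x`.
Iterating puts all branch vertices of `T` on one path `P`. A spanning tree of `T ∪ P` containing
`P` is then a generalized caterpillar: off `P` its vertices have no more neighbours than in `T`.
-/

lemma List.Nodup.mem_drop_iff_le_idxOf {α : Type*} [DecidableEq α] {l : List α} (hl : l.Nodup)
    {n : ℕ} {a : α} (ha : a ∈ l) : a ∈ l.drop n ↔ n ≤ l.idxOf a := by
  rw [← List.take_append_drop n l, List.nodup_append] at hl
  rw [← not_lt, ← List.mem_take_iff_idxOf_lt ha]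
  refine ⟨fun hd ht => hl.2.2 a ht a hd rfl, fun ht => ?_⟩
  rw [← List.take_append_drop n l, List.mem_append] at ha
  exact ha.resolve_left ht

lemma Finset.exists_gap_of_card_le {α : Type*} [LinearOrder α] {Q R : Finset α} (hQ : Q.Nonempty)
    (hRQ : R.card ≤ Q.card) :
    (∃ q ∈ Q, ∀ b ∈ R, b ≤ q) ∨ (∃ q ∈ Q, ∀ b ∈ R, q ≤ b) ∨
      ∃ q₁ ∈ Q, ∃ q₂ ∈ Q, q₁ < q₂ ∧ ∀ b ∈ R, b ≤ q₁ ∨ q₂ ≤ b := by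
  by_contra! h
  obtain ⟨habove, hbelow, hgap⟩ := h
  -- sending `q` to the least element of `R` above it is injective and misses an element below `Q`
  have hnext : ∀ q ∈ Q, ∃ n ∈ R, q < n ∧ ∀ b ∈ R, q < b → n ≤ b := by
    intro q hq
    have hne : (R.filter (q < ·)).Nonempty :=
      let ⟨b, hb, hqb⟩ := habove q hq
      ⟨b, Finset.mem_filter.mpr ⟨hb, hqb⟩⟩
    obtain ⟨hn, hqn⟩ := Finset.mem_filter.mp ((R.filter (q < ·)).min'_mem hne)
    exact ⟨_, hn, hqn, fun b hb hqb => Finset.min'_le _ _ (Finset.mem_filter.mpr ⟨hb, hqb⟩)⟩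
  choose! next hnextR hlt hleast using hnext
  obtain ⟨b₀, hb₀, hb₀Q⟩ := hbelow _ (Q.min'_mem hQ)
  have hmaps : Set.MapsTo next Q (R.erase b₀) := fun q hq =>
    Finset.mem_erase.mpr ⟨((hb₀Q.trans_le (Q.min'_le q hq)).trans (hlt q hq)).ne', hnextR q hq⟩
  have hinj : Set.InjOn next Q := by
    intro q₁ hq₁ q₂ hq₂ heq
    by_contra hne
    wlog h12 : q₁ < q₂ generalizing q₁ q₂
    · exact this hq₂ hq₁ heq.symm (Ne.symm hne) (lt_of_le_of_ne (not_lt.mp h12) (Ne.symm hne))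
    obtain ⟨b, hb, hq₁b, hbq₂⟩ := hgap q₁ hq₁ q₂ hq₂ h12
    exact (((hleast q₁ hq₁ b hb hq₁b).trans_lt hbq₂).trans (hlt q₂ hq₂)).ne heq
  have := Finset.card_le_card_of_injOn next hmaps hinj
  rw [Finset.card_erase_of_mem hb₀] at this
  have := Finset.card_pos.mpr ⟨b₀, hb₀⟩
  omega

namespace SimpleGraph

variable {V : Type*} {G : SimpleGraph V}

namespace Walk

variable {u v w : V}

lemma IsPath.append {p : G.Walk u v} {q : G.Walk v w} (hp : p.IsPath) (hq : q.IsPath)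
    (h : ∀ y ∈ p.support, y ∈ q.support → y = v) : (p.append q).IsPath := by
  have hq' := hq.support_nodup
  rw [← q.cons_tail_support, List.nodup_cons] at hq'
  rw [isPath_def, support_append, List.nodup_append]
  refine ⟨hp.support_nodup, hq'.2, fun y hy z hz hyz => ?_⟩
  subst hyz
  exact hq'.1 (h y hy (List.mem_of_mem_tail hz) ▸ hz)

lemma exists_eq_append_first_mem {S : Set V} (p : G.Walk u v) (h : ∃ y ∈ p.support, y ∈ S) :
    ∃ c ∈ S, ∃ (q : G.Walk u c) (r : G.Walk c v), p = q.append r ∧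
      ∀ y ∈ q.support, y ∈ S → y = c := by
  induction p with
  | nil =>
    obtain ⟨y, hy, hyS⟩ := h
    rw [support_nil, List.mem_singleton] at hy
    subst hy
    exact ⟨_, hyS, nil, nil, rfl, by simp⟩
  | @cons a b _ hab p ih =>
    by_cases ha : a ∈ S
    · exact ⟨a, ha, nil, cons hab p, rfl, by simp⟩
    · obtain ⟨c, hc, q, r, rfl, hq⟩ := ih (by simpa [ha] using h)
      refine ⟨c, hc, cons hab q, r, rfl, ?_⟩
      simp only [support_cons, List.mem_cons, forall_eq_or_imp]
      exact ⟨fun h => absurd h ha, hq⟩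

variable [DecidableEq V]

lemma IsPath.start_notMem_support_dropUntil {p : G.Walk u v} (hp : p.IsPath) (hw : w ∈ p.support)
    (h : u ≠ w) : u ∉ (p.dropUntil w hw).support := by
  intro hu
  have hpq : ((p.takeUntil w hw).append (p.dropUntil w hw)).IsPath := by rwa [take_spec]
  exact hpq.ne_of_mem_support_of_append h (start_mem_support _) hu rfl

lemma IsPath.notMem_of_mem_support_takeUntil {S : Set V} {p : G.Walk u v} (hp : p.IsPath)
    (hS : ∀ y ∈ p.support, y ∈ S → y = v) (hw : w ∈ p.support) (hwS : w ∉ S) :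
    ∀ y ∈ (p.takeUntil w hw).support, y ∉ S := by
  intro y hy hyS
  obtain rfl := hS y (support_takeUntil_subset_support _ _ hy) hyS
  by_cases hyw : y = w
  · exact hwS (hyw ▸ hyS)
  · exact endpoint_notMem_support_takeUntil hp hw hyw hy

lemma IsPath.notMem_of_mem_support_dropUntil {S : Set V} {p : G.Walk u v} (hp : p.IsPath)
    (hS : ∀ y ∈ p.support, y ∈ S → y = u) (hw : w ∈ p.support) (hwS : w ∉ S) :
    ∀ y ∈ (p.dropUntil w hw).support, y ∉ S := by
  intro y hy hyS
  obtain rfl := hS y (support_dropUntil_subset_support _ _ hy) hyS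
  by_cases hyw : y = w
  · exact hwS (hyw ▸ hyS)
  · exact hp.start_notMem_support_dropUntil hw hyw hy

end Walk

open Walk

def Separates (G : SimpleGraph V) (A B S : Set V) : Prop :=
  ∀ ⦃a b : V⦄, a ∈ A → b ∈ B → ∀ w : G.Walk a b, ∃ s ∈ S, s ∈ w.support

structure PathSystem (G : SimpleGraph V) (A B : Set V) (k : ℕ) where
  start : Fin k → V
  finish : Fin k → V
  walk : ∀ i, G.Walk (start i) (finish i)
  start_mem : ∀ i, start i ∈ A
  finish_mem : ∀ i, finish i ∈ B
  isPath : ∀ i, (walk i).IsPath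
  disjoint : Pairwise fun i j => (walk i).support.Disjoint (walk j).support

variable {A B X : Set V} {k : ℕ}

namespace PathSystem

def mapLe {G' : SimpleGraph V} (h : G ≤ G') (P : G.PathSystem A B k) : G'.PathSystem A B k where
  start := P.start
  finish := P.finish
  walk i := (P.walk i).mapLe h
  start_mem := P.start_mem
  finish_mem := P.finish_mem
  isPath i := (P.isPath i).mapLe h
  disjoint _ _ hij := by simpa using P.disjoint hij

def reverse (P : G.PathSystem A B k) : G.PathSystem B A k where
  start := P.finish
  finish := P.start
  walk i := (P.walk i).reverse
  start_mem := P.finish_mem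
  finish_mem := P.start_mem
  isPath i := (P.isPath i).reverse
  disjoint _ _ hij := by simpa using P.disjoint hij

lemma finish_injective (P : G.PathSystem A B k) : Function.Injective P.finish := by
  intro i j h
  by_contra hij
  exact P.disjoint hij (end_mem_support _) (by rw [h]; exact end_mem_support _)

lemma start_injective (P : G.PathSystem A B k) : Function.Injective P.start :=
  P.reverse.finish_injective

lemma exists_start_eq [Finite V] (P : G.PathSystem A B k) (hA : A.ncard = k) :
    ∀ a ∈ A, ∃ i, P.start i = a := by
  have hrange : Set.range P.start = A := Set.eq_of_subset_of_ncard_le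
    (Set.range_subset_iff.mpr P.start_mem)
    (by rw [Set.ncard_range_of_injective P.start_injective, Nat.card_fin, hA])
  exact fun a ha => by rwa [← hrange] at ha

lemma exists_finish_eq [Finite V] (P : G.PathSystem A B k) (hB : B.ncard = k) :
    ∀ b ∈ B, ∃ i, P.finish i = b :=
  P.reverse.exists_start_eq hB

lemma exists_forall_mem_eq_finish (P : G.PathSystem A B k) :
    ∃ P' : G.PathSystem A B k, ∀ i, ∀ y ∈ (P'.walk i).support, y ∈ B → y = P'.finish i := by
  choose c hc q r hqr hq using fun i =>
    (P.walk i).exists_eq_append_first_mem ⟨P.finish i, end_mem_support _, P.finish_mem i⟩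
  have hsub : ∀ i, (q i).support ⊆ (P.walk i).support := fun i y hy => by
    rw [hqr i, mem_support_append_iff]
    exact Or.inl hy
  refine ⟨⟨P.start, c, q, P.start_mem, hc, fun i => ?_, fun i j hij => ?_⟩, hq⟩
  · exact (hqr i ▸ P.isPath i).of_append_left
  · exact fun y hyi hyj => P.disjoint hij (hsub i hyi) (hsub j hyj)

lemma exists_forall_mem_eq_start (P : G.PathSystem A B k) :
    ∃ P' : G.PathSystem A B k, ∀ i, ∀ y ∈ (P'.walk i).support, y ∈ A → y = P'.start i := by
  obtain ⟨P', hP'⟩ := P.reverse.exists_forall_mem_eq_finish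
  exact ⟨P'.reverse, fun i y hy => hP' i y (by simpa [reverse] using hy)⟩

lemma nonempty_of_le_ncard_inter [Finite V] (h : k ≤ (A ∩ B).ncard) :
    Nonempty (G.PathSystem A B k) := by
  have := Fintype.ofFinite ↥(A ∩ B)
  obtain ⟨f⟩ := Function.Embedding.nonempty_of_card_le (α := Fin k) (β := ↥(A ∩ B))
    (by rwa [Fintype.card_fin, ← Nat.card_eq_fintype_card, Nat.card_coe_set_eq])
  refine ⟨⟨fun i => f i, fun i => f i, fun _ => nil, fun i => (f i).2.1, fun i => (f i).2.2,
    fun _ => IsPath.nil, fun i j hij y hyi hyj => hij (f.injective ?_)⟩⟩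
  simp only [support_nil, List.mem_singleton] at hyi hyj
  exact Subtype.ext (hyi.symm.trans hyj)

lemma nonempty_of_glue [Finite V] (hX : X.ncard = k) (L : G.PathSystem A X k)
    (R : G.PathSystem X B k)
    (hL : ∀ i, ∀ y ∈ (L.walk i).support, y ∈ X → y = L.finish i)
    (hR : ∀ j, ∀ y ∈ (R.walk j).support, y ∈ X → y = R.start j)
    (hLR : ∀ i j, ∀ y ∈ (L.walk i).support, y ∈ (R.walk j).support → y ∈ X) :
    Nonempty (G.PathSystem A B k) := by
  choose σ hσ using fun i => R.exists_start_eq hX _ (L.finish_mem i)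
  have hmeet : ∀ i j, ∀ y ∈ (L.walk i).support, y ∈ (R.walk j).support →
      y = L.finish i ∧ y = R.start j := fun i j y hyL hyR =>
    ⟨hL i y hyL (hLR i j y hyL hyR), hR j y hyR (hLR i j y hyL hyR)⟩
  let W i := (L.walk i).append ((R.walk (σ i)).copy (hσ i) rfl)
  have hW : ∀ i, ∀ y ∈ (W i).support, y ∈ (L.walk i).support ∨ y ∈ (R.walk (σ i)).support :=
    fun i y hy => by simpa [W, mem_support_append_iff] using hy
  refine ⟨⟨L.start, fun i => R.finish (σ i), W, L.start_mem, fun i => R.finish_mem _, fun i => ?_,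
    fun i j hij y hyi hyj => ?_⟩⟩
  · refine (L.isPath i).append ((isPath_copy _ _ _).mpr (R.isPath _)) fun y hyL hyR => ?_
    rw [support_copy] at hyR
    exact (hmeet i _ y hyL hyR).1
  · have hσij : σ i ≠ σ j := fun h => hij (L.finish_injective (by rw [← hσ, ← hσ, h]))
    rcases hW i y hyi with hyi | hyi <;> rcases hW j y hyj with hyj | hyj
    · exact L.disjoint hij hyi hyj
    · exact hij (L.finish_injective ((hmeet i _ y hyi hyj).1.symm.trans
        ((hmeet i _ y hyi hyj).2.trans (hσ j))))
    · exact hij (L.finish_injective ((hσ i).symm.trans ((hmeet j _ y hyj hyi).2.symm.trans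
        (hmeet j _ y hyj hyi).1)))
    · exact R.disjoint hσij hyi hyj

lemma exists_cons {x y : V} (R : G.PathSystem (insert y X) B k) (hxy : G.Adj x y)
    (hx : ∀ j, x ∉ (R.walk j).support) :
    ∃ R' : G.PathSystem (insert x X) B k, ∀ j,
      (R.start j = y → R'.start j = x ∧ (R'.walk j).support = x :: (R.walk j).support) ∧
      (R.start j ≠ y → R'.start j = R.start j ∧ (R'.walk j).support = (R.walk j).support) := by
  classical
  let start j := if R.start j = y then x else R.start j
  let W : ∀ j, G.Walk (start j) (R.finish j) := fun j =>
    if h : R.start j = y then (cons hxy ((R.walk j).copy h rfl)).copy (by simp [start, h]) rfl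
    else (R.walk j).copy (by simp [start, h]) rfl
  have hW : ∀ j, (R.start j = y → (W j).support = x :: (R.walk j).support) ∧
      (R.start j ≠ y → (W j).support = (R.walk j).support) :=
    fun j => ⟨fun h => by simp [W, h], fun h => by simp [W, h]⟩
  refine ⟨⟨start, R.finish, W, fun j => ?_, R.finish_mem, fun j => ?_, fun i j hij z hzi hzj => ?_⟩,
    fun j => ⟨fun h => ⟨if_pos h, (hW j).1 h⟩, fun h => ⟨if_neg h, (hW j).2 h⟩⟩⟩
  · by_cases h : R.start j = y
    · simp [start, h]
    · simp only [start, h, if_false]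
      exact .inr ((R.start_mem j).resolve_left h)
  · by_cases h : R.start j = y
    · simp only [W, h, dite_true, isPath_copy, cons_isPath_iff, support_copy]
      exact ⟨R.isPath j, hx j⟩
    · simpa [W, h] using R.isPath j
  · have hsupp : ∀ j, z ∈ (W j).support → (z = x ∧ R.start j = y) ∨ z ∈ (R.walk j).support := by
      intro j hz
      by_cases h : R.start j = y
      · rw [(hW j).1 h, List.mem_cons] at hz
        exact hz.imp (fun hz => ⟨hz, h⟩) id
      · exact Or.inr ((hW j).2 h ▸ hz)
    rcases hsupp i hzi with ⟨rfl, hi⟩ | hzi <;> rcases hsupp j hzj with ⟨hzx, hj⟩ | hzj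
    · exact hij (R.start_injective (hi.trans hj.symm))
    · exact hx j hzj
    · exact hx i (hzx ▸ hzi)
    · exact R.disjoint hij hzi hzj

lemma nonempty_of_glue_across_edge [Finite V] {S : Set V} {x b : V} (hxb : G.Adj x b)
    (hxS : x ∉ S) (hbS : b ∉ S) (hk : (insert x S).ncard = k)
    (L : G.PathSystem A (insert x S) k) (R : G.PathSystem (insert b S) B k)
    (hL : ∀ i, ∀ y ∈ (L.walk i).support, y ∈ insert x S → y = L.finish i)
    (hR : ∀ j, ∀ y ∈ (R.walk j).support, y ∈ S → y = R.start j)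
    (hLR : ∀ i j, ∀ y ∈ (L.walk i).support, y ∈ (R.walk j).support → y ∈ S)
    (hxR : ∀ j, x ∉ (R.walk j).support) :
    Nonempty (G.PathSystem A B k) := by
  obtain ⟨R', hR'⟩ := R.exists_cons hxb hxR
  have hR'R : ∀ j, ∀ y ∈ (R'.walk j).support, y = x ∨ y ∈ (R.walk j).support := by
    intro j y hy
    by_cases h : R.start j = b
    · simpa [(hR' j).1 h] using hy
    · simpa [(hR' j).2 h] using Or.inr hy
  refine nonempty_of_glue hk L R' hL ?_ fun i j y hyL hyR => (hR'R j y hyR).elim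
    (fun h => h ▸ Set.mem_insert x S) fun hyR => .inr (hLR i j y hyL hyR)
  intro j y hy hyX
  by_cases h : R.start j = b
  · rw [((hR' j).1 h).1]
    rcases hyX with rfl | hyS
    · rfl
    rcases hR'R j y hy with rfl | hyR
    · exact absurd hyS hxS
    · exact absurd (by rw [← h, ← hR j y hyR hyS]; exact hyS) hbS
  · obtain ⟨hs, hsupp⟩ := (hR' j).2 h
    rw [hsupp] at hy
    rw [hs]
    rcases hyX with rfl | hyS
    · exact absurd hy (hxR j)
    · exact hR j y hy hyS

end PathSystem

open PathSystem

lemma separates_inter_of_forall_not_adj (h : ∀ x, ∀ b ∈ B, ¬ G.Adj x b) :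
    G.Separates A B (A ∩ B) := by
  intro a b ha hb w
  cases w with
  | nil => exact ⟨a, ⟨ha, hb⟩, start_mem_support _⟩
  | cons hac q =>
    exfalso
    cases q.reverse with
    | nil => exact h _ b hb hac
    | cons hbd _ => exact h _ b hb hbd.symm

lemma Separates.of_deleteEdges_insert_left {S Z : Set V} {x b : V} (hb : b ∈ B)
    (hS : (G.deleteEdges {s(x, b)}).Separates A B S)
    (hZ : (G.deleteEdges {s(x, b)}).Separates A (insert x S) Z) : G.Separates A B Z := by
  intro a c ha hc w
  obtain ⟨d, hd, q, r, rfl, hq⟩ :=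
    w.exists_eq_append_first_mem (S := insert x S ∪ B) ⟨c, end_mem_support _, Or.inr hc⟩
  -- both ends of the edge `xb` lie in `insert x S ∪ B`, so `q` could only use it if `x = b`
  have hqe : s(x, b) ∉ q.edges := fun he =>
    (q.adj_of_mem_edges he).ne ((hq x (q.fst_mem_support_of_mem_edges he) (.inl (.inl rfl))).trans
      (hq b (q.snd_mem_support_of_mem_edges he) (.inr hb)).symm)
  have hdX : d ∈ insert x S := by
    rcases hd with hdX | hdB
    · exact hdX
    obtain ⟨s, hs, hsq⟩ := hS ha hdB (q.toDeleteEdge _ hqe)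
    rw [support_transfer] at hsq
    rw [← hq s hsq (.inl (.inr hs))]
    exact .inr hs
  obtain ⟨z, hz, hzq⟩ := hZ ha hdX (q.toDeleteEdge _ hqe)
  rw [support_transfer] at hzq
  exact ⟨z, hz, (mem_support_append_iff _ _).mpr (.inl hzq)⟩

lemma Separates.of_deleteEdges_insert_right {S Z : Set V} {x b : V} (hb : b ∈ B)
    (hS : (G.deleteEdges {s(x, b)}).Separates A B S)
    (hZ : (G.deleteEdges {s(x, b)}).Separates (insert b S) B Z) : G.Separates A B Z := by
  intro a c ha hc w
  by_contra! hw
  have hbZ : b ∈ Z := by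
    obtain ⟨s, hs, hsb⟩ := hZ (Set.mem_insert b S) hb nil
    rw [support_nil, List.mem_singleton] at hsb
    exact hsb ▸ hs
  have hwe : s(x, b) ∉ w.edges := fun he => hw b hbZ (w.snd_mem_support_of_mem_edges he)
  classical
  obtain ⟨s, hs, hsw⟩ := hS ha hc (w.toDeleteEdge _ hwe)
  obtain ⟨z, hz, hzw⟩ := hZ (Set.mem_insert_of_mem b hs) hc ((w.toDeleteEdge _ hwe).dropUntil s hsw)
  have := support_dropUntil_subset_support _ hsw hzw
  rw [support_transfer] at this
  exact hw z hz this

lemma Separates.mem_of_mem_support_of_mem_support [DecidableEq V] {S : Set V}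
    (hS : G.Separates A B S) {a c d e z : V} (ha : a ∈ A) (he : e ∈ B) {p : G.Walk a c}
    {q : G.Walk d e} (hp : p.IsPath) (hq : q.IsPath) (hpS : ∀ y ∈ p.support, y ∈ S → y = c)
    (hqS : ∀ y ∈ q.support, y ∈ S → y = d) (hzp : z ∈ p.support) (hzq : z ∈ q.support) :
    z ∈ S := by
  by_contra hz
  obtain ⟨s, hs, hsw⟩ := hS ha he ((p.takeUntil z hzp).append (q.dropUntil z hzq))
  rcases (mem_support_append_iff _ _).mp hsw with h | h
  · exact hp.notMem_of_mem_support_takeUntil hpS hzp hz s h hs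
  · exact hq.notMem_of_mem_support_dropUntil hqS hzq hz s h hs

lemma nonempty_pathSystem_of_separates_deleteEdges [Finite V] {S : Set V} {x b : V}
    (hxb : G.Adj x b) (hb : b ∈ B) (hsep : ∀ Z, G.Separates A B Z → k ≤ Z.ncard)
    (hS : (G.deleteEdges {s(x, b)}).Separates A B S) (hSk : S.ncard < k)
    (ih : ∀ A' B' : Set V, (∀ Z, (G.deleteEdges {s(x, b)}).Separates A' B' Z → k ≤ Z.ncard) →
      Nonempty ((G.deleteEdges {s(x, b)}).PathSystem A' B' k)) :
    Nonempty (G.PathSystem A B k) := by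
  classical
  have hX : ∀ Z, (G.deleteEdges {s(x, b)}).Separates A (insert x S) Z → k ≤ Z.ncard :=
    fun Z hZ => hsep Z (hS.of_deleteEdges_insert_left hb hZ)
  have hY : ∀ Z, (G.deleteEdges {s(x, b)}).Separates (insert b S) B Z → k ≤ Z.ncard :=
    fun Z hZ => hsep Z (hS.of_deleteEdges_insert_right hb hZ)
  have hXk : k ≤ (insert x S).ncard := hX _ fun _ _ _ hd w => ⟨_, hd, end_mem_support w⟩
  have hYk : k ≤ (insert b S).ncard := hY _ fun _ _ hd _ w => ⟨_, hd, start_mem_support w⟩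
  have hxS : x ∉ S := fun h => by rw [Set.insert_eq_of_mem h] at hXk; omega
  have hbS : b ∉ S := fun h => by rw [Set.insert_eq_of_mem h] at hYk; omega
  have hXcard : (insert x S).ncard = k := by rw [Set.ncard_insert_of_notMem hxS] at hXk ⊢; omega
  obtain ⟨L, hL⟩ := (ih _ _ hX).some.exists_forall_mem_eq_finish
  obtain ⟨R, hR⟩ := (ih _ _ hY).some.exists_forall_mem_eq_start
  have hLS : ∀ i, ∀ y ∈ (L.walk i).support, y ∈ S → y = L.finish i :=
    fun i y hy hyS => hL i y hy (.inr hyS)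
  have hRS : ∀ j, ∀ y ∈ (R.walk j).support, y ∈ S → y = R.start j :=
    fun j y hy hyS => hR j y hy (.inr hyS)
  have hLR : ∀ i j, ∀ y ∈ (L.walk i).support, y ∈ (R.walk j).support → y ∈ S :=
    fun i j y hyL hyR => hS.mem_of_mem_support_of_mem_support (L.start_mem i) (R.finish_mem j)
      (L.isPath i) (R.isPath j) (hLS i) (hRS j) hyL hyR
  have hxR : ∀ j, x ∉ (R.walk j).support := by
    intro j hxj
    obtain ⟨i, hi⟩ := L.exists_finish_eq hXcard x (Set.mem_insert x S)
    exact hxS (hi ▸ hLR i j _ (end_mem_support _) (by rwa [hi]))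
  have hle := G.deleteEdges_le {s(x, b)}
  exact nonempty_of_glue_across_edge hxb hxS hbS hXcard (L.mapLe hle) (R.mapLe hle)
    (by simpa [PathSystem.mapLe] using hL) (by simpa [PathSystem.mapLe] using hRS)
    (by simpa [PathSystem.mapLe] using hLR) (by simpa [PathSystem.mapLe] using hxR)

theorem menger [Finite V] (h : ∀ S, G.Separates A B S → k ≤ S.ncard) :
    Nonempty (G.PathSystem A B k) := by
  induction hn : G.edgeSet.ncard using Nat.strong_induction_on generalizing G A B with
  | _ n ih =>
  by_cases hB : ∃ x b, G.Adj x b ∧ b ∈ B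
  · obtain ⟨x, b, hxb, hb⟩ := hB
    have hlt : (G.deleteEdges {s(x, b)}).edgeSet.ncard < n := by
      rw [edgeSet_deleteEdges, ← hn]
      exact Set.ncard_sdiff_singleton_lt_of_mem hxb
    have ih' := fun A' B' h' => ih _ hlt (A := A') (B := B') h' rfl
    by_cases hS : ∃ S, (G.deleteEdges {s(x, b)}).Separates A B S ∧ S.ncard < k
    · obtain ⟨S, hS, hSk⟩ := hS
      exact nonempty_pathSystem_of_separates_deleteEdges hxb hb h hS hSk ih'
    · push Not at hS
      exact (ih' A B hS).map (PathSystem.mapLe (G.deleteEdges_le _))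
  · push Not at hB
    exact nonempty_of_le_ncard_inter (h _ (separates_inter_of_forall_not_adj fun x b hb hxb =>
      hB x b hxb hb))

lemma _root_.DeleteConnected.exists_isPath {S : Set V} (h : DeleteConnected G S) {a b : V}
    (ha : a ∉ S) (hb : b ∉ S) : ∃ w : G.Walk a b, w.IsPath ∧ ∀ y ∈ w.support, y ∉ S := by
  classical
  obtain ⟨w⟩ := h.preconnected ⟨a, trivial, ha⟩ ⟨b, trivial, hb⟩
  refine ⟨(w.map (Subgraph.hom _)).bypass, bypass_isPath _, fun y hy => ?_⟩
  obtain ⟨z, -, rfl⟩ := List.mem_map.mp (Walk.support_map _ _ ▸ support_bypass_subset_support _ hy)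
  exact z.2.2

lemma Walk.notMem_support_of_deleteIncidenceSet {x a b : V}
    (p : (G.deleteIncidenceSet x).Walk a b) (ha : a ≠ x) : x ∉ p.support := by
  induction p with
  | nil => simpa using ha.symm
  | cons h p ih =>
    rw [deleteIncidenceSet_adj] at h
    simpa [ha.symm] using ih h.2.2

lemma exists_fan [Finite V] (hG : ∀ S : Set V, S.ncard < k → DeleteConnected G S)
    {x : V} {U : Set V} (hx : x ∉ U) :
    ∃ (t : Fin (min k U.ncard) → V) (F : ∀ i, G.Walk x (t i)), (∀ i, t i ∈ U) ∧
      (∀ i, (F i).IsPath) ∧ (∀ i, ∀ y ∈ (F i).support, y ∈ U → y = t i) ∧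
      Pairwise fun i j => ∀ y ∈ (F i).support, y ∈ (F j).support → y = x := by
  classical
  have hsep : ∀ Z, (G.deleteIncidenceSet x).Separates (G.neighborSet x) U Z →
      min k U.ncard ≤ Z.ncard := by
    intro Z hZ
    by_contra! hZk
    obtain ⟨u, hu, huZ⟩ :=
      Set.exists_mem_notMem_of_ncard_lt_ncard (hZk.trans_le (min_le_right _ _))
    have hZx : (Z \ {x}).ncard < k :=
      (Set.ncard_le_ncard Set.sdiff_subset).trans_lt (hZk.trans_le (min_le_left _ _))
    obtain ⟨w, hw, hwZ⟩ := (hG _ hZx).exists_isPath (fun h => h.2 rfl) (fun h => huZ h.1)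
    cases w with
    | nil => exact hx hu
    | cons hxa q =>
      have hxq : x ∉ q.support := ((cons_isPath_iff _ _).mp hw).2
      obtain ⟨z, hz, hzq⟩ := hZ hxa hu (q.transfer _ fun e he => by
        rw [edgeSet_deleteIncidenceSet]
        exact ⟨q.edges_subset_edgeSet he, fun h => hxq (mem_support_of_mem_edges he h.2)⟩)
      rw [support_transfer] at hzq
      exact hwZ z (List.mem_cons_of_mem _ hzq) ⟨hz, fun h => hxq (h ▸ hzq)⟩
  obtain ⟨P, hP⟩ := (menger hsep).some.exists_forall_mem_eq_finish
  have hxP : ∀ i, x ∉ (P.walk i).support := fun i =>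
    (P.walk i).notMem_support_of_deleteIncidenceSet (G.ne_of_adj (P.start_mem i)).symm
  let F i : G.Walk x (P.finish i) :=
    cons ((G.mem_neighborSet x _).mp (P.start_mem i)) ((P.walk i).mapLe (G.deleteIncidenceSet_le x))
  have hF : ∀ i, (F i).support = x :: (P.walk i).support := fun i => by simp [F]
  refine ⟨P.finish, F, P.finish_mem, fun i => ?_, fun i y hy hyU => ?_, fun i j hij y hyi hyj => ?_⟩
  · rw [isPath_def, hF, List.nodup_cons]
    exact ⟨hxP i, (P.isPath i).support_nodup⟩
  · rw [hF, List.mem_cons] at hy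
    rcases hy with rfl | hy
    · exact absurd hyU hx
    · exact hP i y hy hyU
  · rw [hF, List.mem_cons] at hyi hyj
    rcases hyi with rfl | hyi
    · rfl
    · exact hyj.resolve_right (P.disjoint hij hyi)

namespace Walk

variable [DecidableEq V] {u v w : V}

lemma mem_support_takeUntil_iff (p : G.Walk u v) (hw : w ∈ p.support) {y : V}
    (hy : y ∈ p.support) :
    y ∈ (p.takeUntil w hw).support ↔ p.support.idxOf y ≤ p.support.idxOf w := by
  rw [takeUntil_eq_take, support_copy, support_take, List.mem_take_iff_idxOf_lt hy, Nat.lt_succ_iff]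

lemma IsPath.mem_support_dropUntil_iff {p : G.Walk u v} (hp : p.IsPath) (hw : w ∈ p.support)
    {y : V} (hy : y ∈ p.support) :
    y ∈ (p.dropUntil w hw).support ↔ p.support.idxOf w ≤ p.support.idxOf y := by
  have hwl : p.support.idxOf w ≤ p.length := by
    have := List.idxOf_lt_length_of_mem hw
    rw [length_support] at this
    omega
  rw [dropUntil_eq_drop, support_copy, drop_support_eq_support_drop_min, min_eq_left hwl,
    hp.support_nodup.mem_drop_iff_le_idxOf hy]

lemma IsPath.append_reverse_of_takeUntil {p : G.Walk u v} (hp : p.IsPath) {x t : V}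
    (ht : t ∈ p.support) {F : G.Walk x t} (hF : F.IsPath)
    (hFp : ∀ y ∈ F.support, y ∈ p.support → y = t) :
    ((p.takeUntil t ht).append F.reverse).IsPath :=
  (hp.takeUntil ht).append hF.reverse fun y hy hyF =>
    hFp y (by simpa using hyF) (support_takeUntil_subset_support _ _ hy)

lemma IsPath.append_dropUntil {p : G.Walk u v} (hp : p.IsPath) {x t : V}
    (ht : t ∈ p.support) {F : G.Walk x t} (hF : F.IsPath)
    (hFp : ∀ y ∈ F.support, y ∈ p.support → y = t) : (F.append (p.dropUntil t ht)).IsPath :=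
  hF.append (hp.dropUntil ht) fun y hyF hy => hFp y hyF (support_dropUntil_subset_support _ _ hy)

lemma IsPath.reroute {p : G.Walk u v} (hp : p.IsPath) {x t₁ t₂ : V} (h₁ : t₁ ∈ p.support)
    (h₂ : t₂ ∈ p.support) (h₁₂ : p.support.idxOf t₁ < p.support.idxOf t₂)
    {F₁ : G.Walk x t₁} {F₂ : G.Walk x t₂} (hF₁ : F₁.IsPath) (hF₂ : F₂.IsPath)
    (hF₁p : ∀ y ∈ F₁.support, y ∈ p.support → y = t₁)
    (hF₂p : ∀ y ∈ F₂.support, y ∈ p.support → y = t₂)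
    (hF₁₂ : ∀ y ∈ F₁.support, y ∈ F₂.support → y = x) :
    (((p.takeUntil t₁ h₁).append F₁.reverse).append (F₂.append (p.dropUntil t₂ h₂))).IsPath := by
  refine (hp.append_reverse_of_takeUntil h₁ hF₁ hF₁p).append
    (hp.append_dropUntil h₂ hF₂ hF₂p) fun y hy₁ hy₂ => ?_
  simp only [mem_support_append_iff, support_reverse, List.mem_reverse] at hy₁ hy₂
  rcases hy₁ with hy₁ | hy₁ <;> rcases hy₂ with hy₂ | hy₂
  · have hyp := support_takeUntil_subset_support _ _ hy₁
    have := (p.mem_support_takeUntil_iff h₁ hyp).mp hy₁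
    rw [hF₂p y hy₂ hyp] at this
    omega
  · have := (p.mem_support_takeUntil_iff h₁ (support_takeUntil_subset_support _ _ hy₁)).mp hy₁
    have := (hp.mem_support_dropUntil_iff h₂ (support_dropUntil_subset_support _ _ hy₂)).mp hy₂
    omega
  · exact hF₁₂ y hy₁ hy₂
  · have hyp := support_dropUntil_subset_support _ _ hy₂
    have := (hp.mem_support_dropUntil_iff h₂ hyp).mp hy₂
    rw [hF₁p y hy₁ hyp] at this
    omega

end Walk

lemma exists_isPath_of_fan {ι : Type*} [Fintype ι] [Nonempty ι] {u v x : V} {P : G.Walk u v}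
    (hP : P.IsPath) (hxP : x ∉ P.support) {t : ι → V} {F : ∀ i, G.Walk x (t i)}
    (htP : ∀ i, t i ∈ P.support) (hF : ∀ i, (F i).IsPath)
    (hFP : ∀ i, ∀ y ∈ (F i).support, y ∈ P.support → y = t i)
    (hFF : Pairwise fun i j => ∀ y ∈ (F i).support, y ∈ (F j).support → y = x)
    (B : Finset V) (hB : B.card ≤ Fintype.card ι) :
    ∃ (u' v' : V) (P' : G.Walk u' v'), P'.IsPath ∧ x ∈ P'.support ∧
      ∀ y ∈ B, y ∈ P.support → y ∈ P'.support := by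
  classical
  let pos (y : V) := P.support.idxOf y
  have ht : Function.Injective (pos ∘ t) := by
    intro i j hij
    by_contra hne
    have := (List.idxOf_inj (htP i)).mp hij
    exact hxP (hFF hne (t i) (end_mem_support _) (by rw [this]; exact end_mem_support _) ▸ htP i)
  have hR : ∀ y ∈ B, y ∈ P.support → pos y ∈ (B.filter (· ∈ P.support)).image pos :=
    fun y hyB hyP => Finset.mem_image_of_mem _ (Finset.mem_filter.mpr ⟨hyB, hyP⟩)
  rcases Finset.exists_gap_of_card_le (R := (B.filter (· ∈ P.support)).image pos)
    (Finset.univ_nonempty.image (pos ∘ t)) (by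
      rw [Finset.card_image_of_injective _ ht, Finset.card_univ]
      exact Finset.card_image_le.trans ((Finset.card_filter_le _ _).trans hB)) with
    ⟨q, hq, hRq⟩ | ⟨q, hq, hRq⟩ | ⟨q₁, hq₁, q₂, hq₂, h₁₂, hR₁₂⟩
  · obtain ⟨i, -, rfl⟩ := Finset.mem_image.mp hq
    refine ⟨_, _, _, hP.append_reverse_of_takeUntil (htP i) (hF i) (hFP i), by simp,
      fun y hyB hyP => ?_⟩
    rw [mem_support_append_iff, mem_support_takeUntil_iff _ _ hyP]
    exact .inl (hRq _ (hR y hyB hyP))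
  · obtain ⟨i, -, rfl⟩ := Finset.mem_image.mp hq
    refine ⟨_, _, _, hP.append_dropUntil (htP i) (hF i) (hFP i), by simp, fun y hyB hyP => ?_⟩
    rw [mem_support_append_iff, hP.mem_support_dropUntil_iff _ hyP]
    exact .inr (hRq _ (hR y hyB hyP))
  · obtain ⟨i, -, rfl⟩ := Finset.mem_image.mp hq₁
    obtain ⟨j, -, rfl⟩ := Finset.mem_image.mp hq₂
    have hij : i ≠ j := fun h => h₁₂.ne (congrArg (pos ∘ t) h)
    refine ⟨_, _, _, hP.reroute (htP i) (htP j) h₁₂ (hF i) (hF j) (hFP i) (hFP j) (hFF hij),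
      by simp, fun y hyB hyP => ?_⟩
    simp only [mem_support_append_iff, mem_support_takeUntil_iff _ _ hyP,
      hP.mem_support_dropUntil_iff _ hyP]
    rcases hR₁₂ _ (hR y hyB hyP) with h | h
    · exact .inl (.inl h)
    · exact .inr (.inr h)

lemma exists_isPath_insert [Finite V]
    (hG : ∀ S : Set V, S.ncard < k → DeleteConnected G S) (hB : B.ncard ≤ k)
    {u v x : V} {P : G.Walk u v} (hP : P.IsPath) (hxB : x ∈ B) (hxP : x ∉ P.support) :
    ∃ (u' v' : V) (P' : G.Walk u' v'), P'.IsPath ∧ x ∈ P'.support ∧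
      ∀ y ∈ B, y ∈ P.support → y ∈ P'.support := by
  classical
  obtain ⟨t, F, htP, hF, hFP, hFF⟩ := exists_fan hG (U := ↑P.support.toFinset) (by simpa using hxP)
  simp only [Finset.mem_coe, List.mem_toFinset] at htP hFP
  have : Nonempty (Fin (min k (↑P.support.toFinset : Set V).ncard)) := by
    have := (Set.ncard_pos (s := B)).mpr ⟨x, hxB⟩
    have := Finset.card_pos.mpr ⟨u, List.mem_toFinset.mpr (start_mem_support P)⟩
    rw [Set.ncard_coe_finset]
    exact ⟨⟨0, by omega⟩⟩
  obtain ⟨u', v', P', hP', hxP', hPP'⟩ := exists_isPath_of_fan hP hxP htP hF hFP hFF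
    {y ∈ P.support.toFinset | y ∈ B} (by
      rw [Fintype.card_fin, Set.ncard_coe_finset]
      refine le_min ((Set.ncard_coe_finset _ ▸ Set.ncard_le_ncard fun y hy =>
        (Finset.mem_filter.mp hy).2).trans hB) (Finset.card_filter_le _ _))
  exact ⟨u', v', P', hP', hxP', fun y hyB hyP => hPP' y (by simp [hyP, hyB]) hyP⟩

lemma exists_isPath_forall_mem_support [Finite V] [Nonempty V]
    (hG : ∀ S : Set V, S.ncard < k → DeleteConnected G S) (hB : B.ncard ≤ k) :
    ∃ (u v : V) (P : G.Walk u v), P.IsPath ∧ ∀ y ∈ B, y ∈ P.support := by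
  suffices ∀ n {u v : V} (P : G.Walk u v), P.IsPath → (B \ {y | y ∈ P.support}).ncard = n →
      ∃ (u v : V) (P : G.Walk u v), P.IsPath ∧ ∀ y ∈ B, y ∈ P.support from
    this _ (nil : G.Walk (Classical.arbitrary V) _) IsPath.nil rfl
  intro n
  induction n using Nat.strong_induction_on with
  | _ n ih =>
  intro u v P hP hn
  by_cases hBP : ∀ y ∈ B, y ∈ P.support
  · exact ⟨u, v, P, hP, hBP⟩
  push Not at hBP
  obtain ⟨x, hxB, hxP⟩ := hBP
  obtain ⟨u', v', P', hP', hxP', hPP'⟩ := exists_isPath_insert hG hB hP hxB hxP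
  refine ih _ ?_ P' hP' rfl
  rw [← hn]
  refine Set.ncard_lt_ncard (LE.le.ssubset_of_mem_notMem (a := x) ?_ ⟨hxB, hxP⟩ fun h => h.2 hxP')
  exact fun y hy => ⟨hy.1, fun hyP => hy.2 (hPP' y hy.1 hyP)⟩

lemma Walk.IsPath.isAcyclic_fromEdgeSet {u v : V} {p : G.Walk u v} (hp : p.IsPath) :
    (fromEdgeSet p.edgeSet).IsAcyclic := by
  induction p with
  | nil => simp
  | @cons a b c h q ih =>
    rw [cons_isPath_iff] at hp
    rw [edgeSet_cons, Set.insert_eq, Set.union_comm, fromEdgeSet_union]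
    change (fromEdgeSet q.edgeSet ⊔ edge a b).IsAcyclic
    refine (ih hp.1).sup_edge_of_not_reachable fun ⟨w⟩ => ?_
    cases w with
    | nil => exact h.ne rfl
    | cons had _ =>
      rw [fromEdgeSet_adj] at had
      exact hp.2 (q.fst_mem_support_of_mem_edges had.1)

end SimpleGraph

open SimpleGraph Walk

lemma isKConnected_kappa {V : Type*} [Finite V] [Nonempty V] (G : SimpleGraph V) :
    IsKConnected G (kappa G) :=
  Nat.sSup_mem ⟨0, (⟨Nat.card_pos, fun _ h => absurd h (Nat.not_lt_zero _)⟩ : IsKConnected G 0)⟩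
    ⟨Nat.card V, fun _ (hk : IsKConnected G _) => hk.1.le⟩

lemma hasSGC_of_isPath {V : Type*} [Finite V] {G T : SimpleGraph V} (hT : T ≤ G)
    (htree : T.IsTree) {u v : V} {P : G.Walk u v} (hP : P.IsPath)
    (hTP : ∀ y ∈ branchVerts T, y ∈ P.support) : HasSGC G := by
  have hPG : fromEdgeSet P.edgeSet ≤ G :=
    (fromEdgeSet_le G).mpr fun e he => P.edges_subset_edgeSet he.1
  obtain ⟨H, hPH, hHK, hH⟩ := (htree.connected.mono le_sup_left).exists_isTree_le_of_le_of_isAcyclic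
    (le_sup_right : fromEdgeSet P.edgeSet ≤ T ⊔ _) hP.isAcyclic_fromEdgeSet
  have hPH' : ∀ e ∈ P.edges, e ∈ H.edgeSet := fun e he =>
    edgeSet_mono hPH (by
      rw [edgeSet_fromEdgeSet]
      exact ⟨he, G.not_isDiag_of_mem_edgeSet (P.edges_subset_edgeSet he)⟩)
  refine ⟨H, hHK.trans (sup_le hT hPG), hH, u, v, P.transfer H hPH', hP.transfer _, fun y hy => ?_⟩
  rw [support_transfer]
  by_contra hyP
  have hHT : H.neighborSet y ⊆ T.neighborSet y := fun z hz =>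
    ((hHK hz).resolve_right fun h => hyP (P.fst_mem_support_of_mem_edges h.1))
  exact hy.not_ge ((Set.ncard_le_ncard hHT).trans (not_lt.mp fun h => hyP (hTP y h)))

theorem stmt7_general {V : Type*} [Fintype V] (G : SimpleGraph V)
    (T : SimpleGraph V) (hT : T ≤ G) (htree : T.IsTree)
    (hbranch : (branchVerts T).ncard ≤ kappa G) :
    HasSGC G := by
  have : Nonempty V := htree.connected.nonempty
  obtain ⟨u, v, P, hP, hTP⟩ := G.exists_isPath_forall_mem_support (isKConnected_kappa G).2 hbranch
  exact hasSGC_of_isPath hT htree hP hTP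

/-- If a connected graph `G` has a spanning tree with at most `κ(G)` branch vertices,
then `G` has a spanning generalized caterpillar. -/
theorem stmt7 {V : Type*} [Fintype V] (G : SimpleGraph V) (hG : G.Connected)
    (T : SimpleGraph V) (hT : T ≤ G) (htree : T.IsTree)
    (hbranch : (branchVerts T).ncard ≤ kappa G) :
    HasSGC G :=
  stmt7_general G T hT htree hbranch
end

section
/- For every positive integer m, there exists a connected graph G with independence number α(G) = (2m+1)(m+2) and connectivity κ(G) = m that has no spanning generalized caterpillar. -/
open SimpleGraph

/-!
The `m + 2` copies `G_i` are joined only through `S`: deleting `S` disconnects the graph, while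
fewer than `m` deletions spare a vertex of `S` and, in each `G_i`, some `t_{i,j}` and some vertex
of the part of size `m`, through which everything stays connected; so `κ = m`. The parts of size
`2m+1` form an independent set, and matching `S` and the parts of size `m` into them shows that
no independent set is larger.

In a spanning tree rooted in `S`, the `m + 1` vertices of the part of size `2m+1` of `G_i` other
than the `t_{i,j}` have their parents in the part of size `m`, so two of them share a parent,
which is a branch vertex. Hence the branch vertices meet all `m + 2` copies, whereas a path can
only pass from one copy to another through `S`, and so meets at most `m + 1` of them.
-/

open Function

section General

variable {V : Type*} {G : SimpleGraph V}

lemma SimpleGraph.Connected.exists_adj_dist_add_one (hG : G.Connected) {r v : V} (hv : v ≠ r) :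
    ∃ u, G.Adj v u ∧ G.dist u r + 1 = G.dist v r := by
  obtain ⟨p, hp⟩ := hG.exists_walk_length_eq_dist v r
  cases p with
  | nil => exact absurd rfl hv
  | cons h q =>
    refine ⟨_, h, le_antisymm ?_ ?_⟩
    · rw [← hp, Walk.length_cons]
      exact Nat.succ_le_succ (dist_le q)
    · calc G.dist v r ≤ G.dist v _ + G.dist _ r := hG.dist_triangle
        _ ≤ 1 + G.dist _ r := by gcongr; exact (dist_eq_one_iff_adj.2 h).le
        _ = G.dist _ r + 1 := add_comm _ _

/-- Two vertices of `B` share a neighbour in `A` closer to `r`, which has a third neighbour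
closer still. -/
lemma SimpleGraph.Connected.exists_two_lt_ncard_neighborSet [Finite V] (hG : G.Connected)
    {r : V} {A B : Finset V} (hrA : r ∉ A) (hrB : r ∉ B)
    (hBA : ∀ b ∈ B, ∀ u, G.Adj b u → u ∈ A) (hAB : A.card < B.card) :
    ∃ a ∈ A, 2 < (G.neighborSet a).ncard := by
  choose! parent hadj hdist using fun v (hv : v ≠ r) => hG.exists_adj_dist_add_one hv
  have hA : ∀ a ∈ A, a ≠ r := fun a ha h => hrA (h ▸ ha)
  have hB : ∀ b ∈ B, b ≠ r := fun b hb h => hrB (h ▸ hb)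
  obtain ⟨b₁, hb₁, b₂, hb₂, hb, heq⟩ := Finset.exists_ne_map_eq_of_card_lt_of_maps_to hAB
    (f := parent) fun b hb => hBA b hb _ (hadj b (hB b hb))
  have ha : parent b₁ ∈ A := hBA b₁ hb₁ _ (hadj b₁ (hB b₁ hb₁))
  have hd₁ := hdist b₁ (hB b₁ hb₁)
  have hd₂ := hdist b₂ (hB b₂ hb₂)
  have hda := hdist _ (hA _ ha)
  refine ⟨_, ha, (Set.two_lt_ncard).2 ⟨b₁, (hadj b₁ (hB b₁ hb₁)).symm, b₂,
    heq ▸ (hadj b₂ (hB b₂ hb₂)).symm, _, hadj _ (hA _ ha), hb, ?_, ?_⟩⟩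
  · rintro h; rw [← h] at hda; omega
  · rintro h; rw [← h, heq] at hda; omega

lemma SimpleGraph.Walk.toSubgraph_le_deleteVerts_iff {S : Set V} {u v : V} (p : G.Walk u v) :
    p.toSubgraph ≤ (⊤ : G.Subgraph).deleteVerts S ↔ ∀ w ∈ p.support, w ∉ S := by
  constructor
  · intro h w hw
    simpa using h.1 (p.mem_verts_toSubgraph.2 hw)
  · intro h
    refine ⟨fun w hw => by simpa using h w (p.mem_verts_toSubgraph.1 hw), fun x y hxy => ?_⟩
    simp [h x (Walk.mem_support_of_adj_toSubgraph hxy),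
      h y (Walk.mem_support_of_adj_toSubgraph hxy.symm), hxy.adj_sub]

lemma deleteConnected_iff_exists_walk {S : Set V} :
    DeleteConnected G S ↔
      Sᶜ.Nonempty ∧ ∀ u v, u ∉ S → v ∉ S → ∃ p : G.Walk u v, ∀ w ∈ p.support, w ∉ S := by
  rw [DeleteConnected, ← Subgraph.connected_iff',
    Subgraph.connected_iff_forall_exists_walk_subgraph]
  simp [Walk.toSubgraph_le_deleteVerts_iff, Set.compl_eq_univ_sdiff]

lemma deleteConnected_of_forall_exists_walk {S : Set V} {r : V}
    (hr : r ∉ S) (h : ∀ u ∉ S, ∃ p : G.Walk u r, ∀ w ∈ p.support, w ∉ S) :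
    DeleteConnected G S := by
  refine deleteConnected_iff_exists_walk.2 ⟨⟨r, hr⟩, fun u v hu hv => ?_⟩
  obtain ⟨p, hp⟩ := h u hu
  obtain ⟨q, hq⟩ := h v hv
  refine ⟨p.append q.reverse, fun w hw => ?_⟩
  rw [Walk.mem_support_append_iff, Walk.support_reverse, List.mem_reverse] at hw
  exact hw.elim (hp w) (hq w)

lemma connected_of_deleteConnected_empty (h : DeleteConnected G ∅) : G.Connected := by
  obtain ⟨⟨v, -⟩, hwalk⟩ := deleteConnected_iff_exists_walk.1 h
  exact (connected_iff G).2
    ⟨fun u w => (hwalk u w (Set.notMem_empty u) (Set.notMem_empty w)).elim fun p _ => p.reachable,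
      ⟨v⟩⟩

end General

section Pieces

variable {V ι : Type*} {G : SimpleGraph V} {φ : V → Option ι}

def IsPieceMap (G : SimpleGraph V) (φ : V → Option ι) : Prop :=
  ∀ x y, G.Adj x y → φ x = none ∨ φ y = none ∨ φ x = φ y

lemma IsPieceMap.mono {G' : SimpleGraph V} (h : IsPieceMap G φ) (hle : G' ≤ G) :
    IsPieceMap G' φ :=
  fun x y hxy => h x y (hle hxy)

lemma IsPieceMap.eq_of_walk (h : IsPieceMap G φ) {u v : V} (p : G.Walk u v)
    (hp : ∀ w ∈ p.support, φ w ≠ none) : φ u = φ v := by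
  induction p with
  | nil => rfl
  | cons hadj q ih =>
    simp only [Walk.support_cons, List.mem_cons, forall_eq_or_imp] at hp
    rw [← ih hp.2]
    rcases h _ _ hadj with h' | h' | h'
    · exact absurd h' hp.1
    · exact absurd h' (hp.2 _ q.start_mem_support)
    · exact h'

variable [DecidableEq ι]

/-- Between two consecutive pieces a walk passes through a vertex with `φ = none`. -/
lemma IsPieceMap.card_pieces_le (h : IsPieceMap G φ) {u v : V} (p : G.Walk u v) :
    (p.support.filterMap φ).toFinset.card ≤ (p.support.tail.filter (φ · = none)).length + 1 := by
  induction p with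
  | @nil u => cases hu : φ u <;> simp [hu]
  | @cons a b _ hadj q ih =>
    have htail : (q.support.tail.filter (φ · = none)).length ≤
        (q.support.filter (φ · = none)).length :=
      ((List.tail_sublist _).filter _).length_le
    have hq : q.support = b :: q.support.tail := q.cons_tail_support.symm
    rw [Walk.support_cons, List.tail_cons, List.filterMap_cons]
    cases ha : φ a with
    | none => exact ih.trans (by omega)
    | some i =>
      rw [List.toFinset_cons]
      rcases h a b hadj with h' | h' | h'
      · simp [ha] at h'
      · have hlen : (q.support.filter (φ · = none)).length =
            (q.support.tail.filter (φ · = none)).length + 1 := by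
          rw [hq, List.filter_cons_of_pos (by simpa using h')]; rfl
        exact (Finset.card_insert_le _ _).trans (by omega)
      · have hi : i ∈ (q.support.filterMap φ).toFinset := by
          simpa using ⟨b, q.start_mem_support, h' ▸ ha⟩
        rw [Finset.insert_eq_of_mem hi]
        exact ih.trans (by omega)

lemma IsPieceMap.card_pieces_le_of_isPath [Finite V] (h : IsPieceMap G φ) {u v : V}
    {p : G.Walk u v} (hp : p.IsPath) :
    (p.support.filterMap φ).toFinset.card ≤ {x | φ x = none}.ncard + 1 := by
  classical
  have hnodup : (p.support.tail.filter (φ · = none)).Nodup :=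
    (hp.support_nodup.sublist (List.tail_sublist _)).filter _
  refine (h.card_pieces_le p).trans (Nat.add_le_add_right ?_ 1)
  rw [← List.toFinset_card_of_nodup hnodup, ← Set.ncard_coe_finset]
  exact Set.ncard_le_ncard (fun x hx => by simp_all)

end Pieces

section Invariants

variable {V : Type*} {G : SimpleGraph V}

lemma kappa_eq_of_isKConnected {k : ℕ} (hk : IsKConnected G k) {S : Set V} (hS : S.ncard = k)
    (hdisc : ¬ DeleteConnected G S) : kappa G = k := by
  have hle : ∀ j ∈ {j | IsKConnected G j}, j ≤ k := fun j hj =>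
    not_lt.1 fun hkj => hdisc (hj.2 S (hS ▸ hkj))
  exact le_antisymm (csSup_le ⟨k, hk⟩ hle) (le_csSup ⟨k, hle⟩ hk)

lemma indepNum_eq_card {W : Type*} [Finite W] {e : W → V} (he : Injective e)
    (hindep : ∀ x y, ¬ G.Adj (e x) (e y)) {f : V → W} (hf : ∀ x y, f x = f y → x ≠ y → G.Adj x y) :
    _root_.indepNum G = Nat.card W := by
  have hmem : Nat.card W ∈ {n | ∃ s : Set V, (∀ a ∈ s, ∀ b ∈ s, ¬ G.Adj a b) ∧ s.ncard = n} :=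
    ⟨Set.range e, by simp [hindep], Set.ncard_range_of_injective he⟩
  have hle : ∀ n ∈ {n | ∃ s : Set V, (∀ a ∈ s, ∀ b ∈ s, ¬ G.Adj a b) ∧ s.ncard = n},
      n ≤ Nat.card W := by
    rintro _ ⟨s, hs, rfl⟩
    have hinj : Set.InjOn f s := fun x hx y hy hxy =>
      by_contra fun hne => hs x hx y hy (hf x y hxy hne)
    rw [← hinj.ncard_image]
    exact Set.ncard_le_card _
  exact le_antisymm (csSup_le ⟨_, hmem⟩ hle) (le_csSup ⟨_, hle⟩ hmem)

end Invariants

namespace ConstructionGraph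

variable {m : ℕ}

abbrev Vert (m : ℕ) : Type := Fin m ⊕ (Fin (m + 2) × (Fin (2 * m + 1) ⊕ Fin m))

/-- The index `i` of the copy `G_i` containing a vertex, and `none` on `S`. -/
def piece : Vert m → Option (Fin (m + 2)) :=
  Sum.elim (fun _ => none) (fun x => some x.1)

lemma isPieceMap_piece : IsPieceMap (ConstructionGraph m) piece := by
  rintro (s | ⟨i, b | a⟩) (s' | ⟨i', b' | a'⟩) h <;> simp_all [ConstructionGraph, piece]

lemma ncard_piece_eq_none : {x | piece (m := m) x = none}.ncard = m := by
  have : {x | piece (m := m) x = none} = Set.range Sum.inl := by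
    ext (s | x) <;> simp [piece]
  rw [this, Set.ncard_range_of_injective Sum.inl_injective, Nat.card_fin]

lemma adj_inl_inr_inl {s : Fin m} {i : Fin (m + 2)} {b : Fin (2 * m + 1)} :
    (ConstructionGraph m).Adj (.inl s) (.inr (i, .inl b)) ↔ (b : ℕ) < m := by
  simp [ConstructionGraph]

lemma adj_inr_inl_inr_inr {i i' : Fin (m + 2)} {b : Fin (2 * m + 1)} {a : Fin m} :
    (ConstructionGraph m).Adj (.inr (i, .inl b)) (.inr (i', .inr a)) ↔ i = i' := by
  simp [ConstructionGraph]

lemma deleteConnected {S : Set (Vert m)} (hS : S.ncard < m) :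
    DeleteConnected (ConstructionGraph m) S := by
  have survivor : ∀ f : Fin m → Vert m, Injective f → ∃ j, f j ∉ S := fun f hf => by
    obtain ⟨_, ⟨j, rfl⟩, hj⟩ := Set.exists_mem_notMem_of_ncard_lt_ncard
      (t := Set.range f) (by rwa [Set.ncard_range_of_injective hf, Nat.card_fin]) S.toFinite
    exact ⟨j, hj⟩
  obtain ⟨s, hs⟩ := survivor Sum.inl Sum.inl_injective
  choose t ht using fun i => survivor (fun j => .inr (i, .inl (Fin.castLE (by omega) j)))
    fun j j' h => by simpa using h
  choose a ha using fun i => survivor (fun j => .inr (i, .inr j)) fun j j' h => by simpa using h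
  have hst : ∀ i, (ConstructionGraph m).Adj (.inr (i, .inl (Fin.castLE (by omega) (t i))))
      (.inl s) := fun i => (adj_inl_inr_inl.2 (t i).2).symm
  refine deleteConnected_of_forall_exists_walk hs fun u hu => ?_
  rcases u with s' | ⟨i, b | a'⟩
  · exact ⟨.cons (adj_inl_inr_inl.2 (t 0).2) (.cons (hst 0) .nil), by simp_all⟩
  · exact ⟨.cons ((adj_inr_inl_inr_inr (a := a i)).2 rfl) (.cons (adj_inr_inl_inr_inr.2 rfl).symm
      (.cons (hst i) .nil)), by simp_all⟩
  · exact ⟨.cons (adj_inr_inl_inr_inr.2 rfl).symm (.cons (hst i) .nil), by simp_all⟩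

lemma not_deleteConnected : ¬ DeleteConnected (ConstructionGraph m) {x | piece x = none} := by
  intro h
  obtain ⟨-, hwalk⟩ := deleteConnected_iff_exists_walk.1 h
  obtain ⟨p, hp⟩ := hwalk (.inr (0, .inl 0)) (.inr (1, .inl 0)) (by simp [piece]) (by simp [piece])
  simpa [piece] using isPieceMap_piece.eq_of_walk p hp

lemma isKConnected : IsKConnected (ConstructionGraph m) m := by
  refine ⟨?_, fun S hS => deleteConnected hS⟩
  simp only [Nat.card_eq_fintype_card, Fintype.card_sum, Fintype.card_prod, Fintype.card_fin]
  nlinarith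

lemma kappa_eq : kappa (ConstructionGraph m) = m :=
  kappa_eq_of_isKConnected isKConnected ncard_piece_eq_none not_deleteConnected

/-- The matching `s ↦ t_{0,s}`, `a_{i,k} ↦ b_{i,m+k}`, extended by the identity on the parts of
size `2m+1`: its fibres are edges or single vertices. -/
def cover : Vert m → Fin (m + 2) × Fin (2 * m + 1)
  | .inl s => (0, Fin.castLE (by omega) s)
  | .inr (i, .inl b) => (i, b)
  | .inr (i, .inr a) => (i, ⟨m + a, by omega⟩)

lemma indepNum_eq : _root_.indepNum (ConstructionGraph m) = (2 * m + 1) * (m + 2) := by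
  rw [indepNum_eq_card (W := Fin (m + 2) × Fin (2 * m + 1)) (e := fun x => .inr (x.1, .inl x.2))
    (f := cover), Nat.card_prod, Nat.card_fin, Nat.card_fin, mul_comm]
  · intro x y h; simpa [Prod.ext_iff] using h
  · simp [ConstructionGraph]
  · rintro (s | ⟨i, b | a⟩) (s' | ⟨i', b' | a'⟩) h hne <;>
      simp only [cover, Prod.mk.injEq, Fin.ext_iff, Fin.val_castLE] at h <;>
      simp [ConstructionGraph, ← Fin.val_inj] at hne ⊢ <;> omega

lemma exists_mem_branchVerts (hm : 1 ≤ m) {T : SimpleGraph (Vert m)}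
    (hT : T ≤ ConstructionGraph m) (hconn : T.Connected) (i : Fin (m + 2)) :
    ∃ x ∈ branchVerts T, piece x = some i := by
  classical
  set A := Finset.univ.image fun a : Fin m => (.inr (i, .inr a) : Vert m)
  set B := Finset.univ.image fun j : Fin (m + 1) =>
    (.inr (i, .inl ⟨m + j, by omega⟩) : Vert m)
  have hAB : A.card < B.card := by
    rw [Finset.card_image_of_injective _ (fun a a' h => by simpa using h),
      Finset.card_image_of_injective _ (fun j j' h => by simpa [Fin.ext_iff] using h)]
    simp
  have hBA : ∀ b ∈ B, ∀ u, T.Adj b u → u ∈ A := by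
    simp only [B, A, Finset.mem_image, Finset.mem_univ, true_and]
    rintro _ ⟨j, rfl⟩ (s | ⟨i', b | a⟩) h <;> have h := hT h <;> simp [ConstructionGraph] at h
    exact ⟨a, by rw [h]⟩
  obtain ⟨x, hx, hbranch⟩ := hconn.exists_two_lt_ncard_neighborSet (r := .inl ⟨0, hm⟩)
    (by simp [A]) (by simp [B]) hBA hAB
  obtain ⟨a, -, rfl⟩ := Finset.mem_image.1 hx
  exact ⟨_, hbranch, rfl⟩

theorem not_hasSGC (hm : 1 ≤ m) : ¬ HasSGC (ConstructionGraph m) := by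
  rintro ⟨T, hT, htree, u, v, p, hp, hbranch⟩
  have hall : ∀ i, i ∈ (p.support.filterMap piece).toFinset := fun i => by
    obtain ⟨x, hx, hxi⟩ := exists_mem_branchVerts hm hT htree.connected i
    exact List.mem_toFinset.2 (List.mem_filterMap.2 ⟨x, hbranch x hx, hxi⟩)
  have hcard := (isPieceMap_piece.mono hT).card_pieces_le_of_isPath hp
  rw [Finset.eq_univ_of_forall hall, Finset.card_univ, Fintype.card_fin,
    ncard_piece_eq_none] at hcard
  omega

lemma connected (hm : 1 ≤ m) : (ConstructionGraph m).Connected :=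
  connected_of_deleteConnected_empty (deleteConnected (by rwa [Set.ncard_empty]))

end ConstructionGraph

/-- For every positive integer `m` there is a connected graph with independence number
`(2m+1)(m+2)` and connectivity `m` having no spanning generalized caterpillar. -/
theorem stmt11 (m : ℕ) (hm : 1 ≤ m) :
    ∃ (V : Type) (G : SimpleGraph V), Finite V ∧ G.Connected ∧
      _root_.indepNum G = (2 * m + 1) * (m + 2) ∧ kappa G = m ∧ ¬ HasSGC G :=
  ⟨_, ConstructionGraph m, inferInstance, ConstructionGraph.connected hm,
    ConstructionGraph.indepNum_eq, ConstructionGraph.kappa_eq, ConstructionGraph.not_hasSGC hm⟩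
end

section
/- In the graph G of the construction (m+2 copies of K_{2m+1,m} each attached to a common independent set S of size m via m chosen vertices from their large parts), if T is a spanning generalized caterpillar of G with branch-vertex set P, then for each i the copy G_i intersects P nontrivially. -/
/-!
Suppose the copy `G_i` contains no branch vertex of `T`, so every vertex of `G_i` has
`T`-degree at most `2`. Let `F` be the restriction of `T` to `G_i`, a graph on `3m + 1`
vertices. Since `A_i` is a vertex cover of `K_{2m+1,m}`, `F` has at most `2m` edges. `G_i`
meets the rest of `G` only at `t_{i,1}, …, t_{i,m}`, and `T` is connected, so every vertex
of `F` reaches one of these `m` vertices inside `F`. A graph in which every vertex reaches one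
of `r` roots has at least `|V| - r` edges (map each non-root to the first edge of a shortest
path to a root), which gives `3m + 1 ≤ 2m + m`.
-/

open SimpleGraph

open Finset

namespace SimpleGraph

variable {V W : Type*} {G : SimpleGraph V}

lemma Reachable.exists_adj_dist_lt {u v : V} (h : G.Reachable u v) (hne : u ≠ v) :
    ∃ w, G.Adj u w ∧ G.dist w v < G.dist u v := by
  obtain ⟨p, hp⟩ := h.exists_walk_length_eq_dist
  have hnil : ¬p.Nil := Walk.not_nil_of_ne hne
  refine ⟨p.snd, Walk.adj_snd hnil, ?_⟩
  calc G.dist p.snd v ≤ p.tail.length := dist_le p.tail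
    _ < p.length := by rw [← Walk.length_tail_add_one hnil]; omega
    _ = G.dist u v := hp

lemma card_compl_le_card_edgeFinset_of_exists_adj_lt [Fintype V] [DecidableEq V]
    [DecidableRel G.Adj] (R : Finset V) (d : V → ℕ)
    (h : ∀ v ∉ R, ∃ w, G.Adj v w ∧ d w < d v) : #Rᶜ ≤ #G.edgeFinset := by
  choose! f hadj hlt using h
  refine card_le_card_of_injOn (fun v => s(v, f v)) (fun v hv => ?_) (fun a ha b hb hab => ?_)
  · simpa using hadj v (by simpa using hv)
  · simp only [coe_compl, Set.mem_compl_iff, mem_coe] at ha hb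
    rcases Sym2.eq_iff.mp hab with ⟨rfl, -⟩ | ⟨hfb, hfa⟩
    · rfl
    · have hba : d b < d a := hfa ▸ hlt a ha
      have hab : d a < d b := hfb ▸ hlt b hb
      omega

lemma card_le_card_edgeFinset_add_card_of_forall_reachable [Fintype V] [DecidableEq V]
    [DecidableRel G.Adj] (R : Finset V) (hR : ∀ v, ∃ r ∈ R, G.Reachable v r) :
    Fintype.card V ≤ #G.edgeFinset + #R := by
  have hne : ∀ v, (R.filter (G.Reachable v)).Nonempty := fun v =>
    let ⟨r, hr, hvr⟩ := hR v; ⟨r, mem_filter.mpr ⟨hr, hvr⟩⟩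
  choose r hr hmin using fun v => exists_min_image _ (G.dist v) (hne v)
  have hdesc : ∀ v ∉ R, ∃ w, G.Adj v w ∧ G.dist w (r w) < G.dist v (r v) := by
    intro v hv
    obtain ⟨hrR, hvr⟩ := mem_filter.mp (hr v)
    obtain ⟨w, hvw, hlt⟩ := hvr.exists_adj_dist_lt fun h => hv (h ▸ hrR)
    refine ⟨w, hvw, lt_of_le_of_lt (hmin w (r v) ?_) hlt⟩
    exact mem_filter.mpr ⟨hrR, hvw.reachable.symm.trans hvr⟩
  have := card_compl_le_card_edgeFinset_of_exists_adj_lt R _ hdesc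
  rw [card_compl] at this
  have := card_le_univ R
  omega

lemma IsVertexCover.card_edgeFinset_le_sum_degree [Fintype V] [DecidableEq V]
    [DecidableRel G.Adj] {c : Finset V} (hc : G.IsVertexCover c) :
    #G.edgeFinset ≤ ∑ v ∈ c, G.degree v := by
  calc #G.edgeFinset ≤ #(c.biUnion fun v => G.incidenceFinset v) := by
        refine card_le_card fun e he => ?_
        induction e with
        | h x y =>
          have hxy : G.Adj x y := by simpa using he
          rcases hc hxy with hx | hy
          · exact mem_biUnion.mpr ⟨x, hx, (G.mem_incidenceFinset _ _).mpr ⟨hxy, by simp⟩⟩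
          · exact mem_biUnion.mpr ⟨y, hy, (G.mem_incidenceFinset _ _).mpr ⟨hxy, by simp⟩⟩
    _ ≤ ∑ v ∈ c, #(G.incidenceFinset v) := card_biUnion_le
    _ = ∑ v ∈ c, G.degree v := by simp only [card_incidenceFinset_eq_degree]

lemma degree_comap_le_ncard_neighborSet [Fintype V] [Finite W] {f : V → W}
    (hf : Function.Injective f) (G : SimpleGraph W) [DecidableRel (G.comap f).Adj] (x : V) :
    (G.comap f).degree x ≤ (G.neighborSet (f x)).ncard := by
  rw [← card_neighborFinset_eq_degree, neighborFinset_def, ← Set.ncard_eq_toFinset_card',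
    ← Set.ncard_image_of_injective _ hf]
  exact Set.ncard_le_ncard (by rintro _ ⟨y, hy, rfl⟩; exact hy) (Set.toFinite _)

lemma Walk.exists_reachable_comap_adj_notMem_range {f : V → W} {G : SimpleGraph W} {x : V}
    {w : W} (p : G.Walk (f x) w) (hw : w ∉ Set.range f) :
    ∃ y z, (G.comap f).Reachable x y ∧ G.Adj (f y) z ∧ z ∉ Set.range f := by
  generalize hu : f x = u at p
  induction p generalizing x with
  | nil => exact absurd ⟨x, hu⟩ hw
  | @cons u v _ huv p ih =>
    subst hu
    by_cases hv : v ∈ Set.range f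
    · obtain ⟨x', rfl⟩ := hv
      obtain ⟨y, z, hx'y, hyz, hz⟩ := ih hw rfl
      exact ⟨y, z, (show (G.comap f).Adj x x' from huv).reachable.trans hx'y, hyz, hz⟩
    · exact ⟨x, v, Reachable.refl x, huv, hv⟩

end SimpleGraph

section Construction

variable {m : ℕ}

abbrev copyVert (i : Fin (m + 2)) (x : Fin (2 * m + 1) ⊕ Fin m) :
    Fin m ⊕ (Fin (m + 2) × (Fin (2 * m + 1) ⊕ Fin m)) :=
  Sum.inr (i, x)

lemma copyVert_injective (i : Fin (m + 2)) : Function.Injective (copyVert i) := by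
  intro x y h
  simpa using h

def chosenVerts (m : ℕ) : Finset (Fin (2 * m + 1) ⊕ Fin m) :=
  ({b : Fin (2 * m + 1) | (b : ℕ) < m} : Finset _).map Function.Embedding.inl

lemma card_chosenVerts : #(chosenVerts m) = m := by
  rw [chosenVerts, card_map, Fin.card_filter_val_lt]
  omega

lemma constructionGraph_adj_copyVert_copyVert {i j : Fin (m + 2)}
    {x y : Fin (2 * m + 1) ⊕ Fin m} :
    (ConstructionGraph m).Adj (copyVert i x) (copyVert j y) ↔
      i = j ∧ x.isLeft ≠ y.isLeft := by
  rcases x with b | a <;> rcases y with b' | a' <;> simp [ConstructionGraph, eq_comm]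

lemma constructionGraph_adj_copyVert_inl {i : Fin (m + 2)} {x : Fin (2 * m + 1) ⊕ Fin m}
    {s : Fin m} :
    (ConstructionGraph m).Adj (copyVert i x) (Sum.inl s) ↔ x ∈ chosenVerts m := by
  rcases x with b | a <;> simp [ConstructionGraph, chosenVerts]

lemma exists_mem_chosenVerts_reachable_comap_copyVert (hm : 1 ≤ m)
    {T : SimpleGraph (Fin m ⊕ (Fin (m + 2) × (Fin (2 * m + 1) ⊕ Fin m)))}
    (hle : T ≤ ConstructionGraph m) (hT : T.Connected) (i : Fin (m + 2))
    (x : Fin (2 * m + 1) ⊕ Fin m) :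
    ∃ t ∈ chosenVerts m, (T.comap (copyVert i)).Reachable x t := by
  have hS : Sum.inl ⟨0, hm⟩ ∉ Set.range (copyVert i) := by rintro ⟨_, ⟨⟩⟩
  obtain ⟨y, z, hxy, hyz, hz⟩ := (hT.preconnected (copyVert i x) (Sum.inl ⟨0, hm⟩)).some
    |>.exists_reachable_comap_adj_notMem_range hS
  refine ⟨y, ?_, hxy⟩
  rcases z with s | ⟨j, w⟩
  · exact constructionGraph_adj_copyVert_inl.mp (hle hyz)
  · obtain ⟨rfl, -⟩ := constructionGraph_adj_copyVert_copyVert.mp (hle hyz)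
    exact absurd ⟨w, rfl⟩ hz

end Construction

/-- In the construction graph, every copy `G_i` contains a branch vertex of any
spanning generalized caterpillar. -/
theorem stmt12 (m : ℕ) (hm : 1 ≤ m)
    (T : SimpleGraph (Fin m ⊕ (Fin (m + 2) × (Fin (2 * m + 1) ⊕ Fin m))))
    (hT : IsSGCof (ConstructionGraph m) T) (i : Fin (m + 2)) :
    ∃ x : Fin (2 * m + 1) ⊕ Fin m, Sum.inr (i, x) ∈ branchVerts T := by
  classical
  obtain ⟨hle, htree, -⟩ := hT
  by_contra! hnone
  have hdeg (x) : (T.comap (copyVert i)).degree x ≤ 2 :=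
    (degree_comap_le_ncard_neighborSet (copyVert_injective i) T x).trans
      (by simpa [branchVerts] using hnone x)
  have hcover : (T.comap (copyVert i)).IsVertexCover
      ↑(univ.map .inr : Finset (Fin (2 * m + 1) ⊕ Fin m)) := by
    intro x y hxy
    have := (constructionGraph_adj_copyVert_copyVert.mp (hle hxy)).2
    rcases x with b | a <;> rcases y with b' | a' <;> simp_all
  have hV := card_le_card_edgeFinset_add_card_of_forall_reachable _
    (exists_mem_chosenVerts_reachable_comap_copyVert hm hle htree.connected i)
  have hE := hcover.card_edgeFinset_le_sum_degree.trans (sum_le_sum fun x _ => hdeg x)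
  simp only [card_chosenVerts, Fintype.card_sum, Fintype.card_fin, sum_const, card_map,
    card_univ, smul_eq_mul] at hV hE
  omega
end
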